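/- Let E, Z be Banach spaces and g : V × Z → E be C¹ on an open set V ⊆ E, linear in the second variable. Suppose η₁, η₂ : [a,b] → V are Carathéodory solutions of y'(t) = g(y(t),γ(t)) for the same γ ∈ L¹([a,b],Z), and η₁(t₀) = η₂(t₀) for some t₀ ∈ [a,b]. Then η₁ = η₂ on [a,b]. -/

import Mathlib

/-!
On a small ball around a point of `V`, the C¹ bound on `g` near `(x, 0)` rescales, by linearity
in the second variable, to `‖g y₁ z - g y₂ z‖ ≤ L ‖z‖ ‖y₁ - y₂‖` for all `z`. Near a time `s`
where the two solutions agree, `d = η₁ - η₂` therefore satisfies `‖d t‖ ≤ ∫ L ‖γ‖ ‖d‖` on an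
interval `J` around `s` so short that `∫_J L ‖γ‖ < 1` (absolute continuity of the integral);
evaluating at a maximum point of `‖d‖` on `J` forces `d = 0` on `J`. Hence the coincidence set
is open in `[a, b]`; it is closed by continuity and contains `t₀`, so it is all of `[a, b]`.
-/

open Set MeasureTheory

/-- A Carathéodory solution of `y'(t) = g(y(t), γ(t))` on `[a,b]`, anchored at `t₀`. -/
def IsCaraSol {X Z : Type*} [NormedAddCommGroup X] [NormedSpace ℝ X]
    (g : X → Z → X) (γ : ℝ → Z) (a b t₀ : ℝ) (η : ℝ → X) : Prop :=
  ContinuousOn η (Icc a b) ∧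
  IntegrableOn (fun s => g (η s) (γ s)) (Icc a b) ∧
  ∀ t ∈ Icc a b, η t = η t₀ + ∫ s in t₀..t, g (η s) (γ s)

open Filter Topology Metric
open scoped Interval

theorem IsPreconnected.eqOn_of_eventuallyEq_of_eq {α β : Type*} [TopologicalSpace α]
    [TopologicalSpace β] [T2Space β] {S : Set α} {f g : α → β} {x₀ : α}
    (hS : IsPreconnected S) (hf : ContinuousOn f S) (hg : ContinuousOn g S)
    (hx₀ : x₀ ∈ S) (h₀ : f x₀ = g x₀) (hloc : ∀ x ∈ S, f x = g x → f =ᶠ[𝓝[S] x] g) :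
    EqOn f g S := by
  have := Subtype.preconnectedSpace hS
  have hclopen : IsClopen {x : S | f x = g x} := by
    refine ⟨isClosed_eq hf.domRestrict hg.domRestrict, isOpen_iff_mem_nhds.2 fun x hx => ?_⟩
    have := hloc x x.2 hx
    rwa [nhdsWithin_eq_map_subtype_coe x.2] at this
  exact fun x hx => eq_univ_iff_forall.1 (hclopen.eq_univ ⟨⟨x₀, hx₀⟩, h₀⟩) ⟨x, hx⟩

theorem exists_ball_norm_sub_le_of_contDiffOn_of_isLinearMap {E Z F : Type*}
    [NormedAddCommGroup E] [NormedSpace ℝ E] [NormedAddCommGroup Z] [NormedSpace ℝ Z]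
    [NormedAddCommGroup F] [NormedSpace ℝ F] {V : Set E} {g : E → Z → F} {x : E}
    (hV : IsOpen V) (hg : ContDiffOn ℝ 1 (fun p : E × Z => g p.1 p.2) (V ×ˢ univ))
    (hlin : ∀ y ∈ V, IsLinearMap ℝ (g y)) (hx : x ∈ V) :
    ∃ r > 0, ∃ L ≥ 0, ∀ y₁ ∈ ball x r, ∀ y₂ ∈ ball x r, ∀ z,
      ‖g y₁ z - g y₂ z‖ ≤ L * ‖z‖ * ‖y₁ - y₂‖ := by
  have hx0 : (x, (0 : Z)) ∈ V ×ˢ univ := ⟨hx, mem_univ _⟩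
  obtain ⟨K, t, ht, hK⟩ :=
    (hg.contDiffAt ((hV.prod isOpen_univ).mem_nhds hx0)).exists_lipschitzOnWith
  obtain ⟨ε, hε, hεt⟩ := Metric.mem_nhds_iff.1 ht
  obtain ⟨ε', hε', hε'V⟩ := Metric.isOpen_iff.1 hV x hx
  set r := min ε ε'
  have hr : 0 < r := lt_min hε hε'
  refine ⟨r, hr, 2 * K / r, by positivity, fun y₁ hy₁ y₂ hy₂ z => ?_⟩
  let A : Z →ₗ[ℝ] F := (hlin y₁ (hε'V (ball_subset_ball (min_le_right _ _) hy₁))).mk' _ -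
    (hlin y₂ (hε'V (ball_subset_ball (min_le_right _ _) hy₂))).mk' _
  have hmem : ∀ y ∈ ball x r, ∀ z' ∈ ball (0 : Z) r, (y, z') ∈ t := fun y hy z' hz' =>
    hεt <| by
      rw [← ball_prod_same]
      exact ⟨ball_subset_ball (min_le_left _ _) hy, ball_subset_ball (min_le_left _ _) hz'⟩
  have hsmall : ∀ z' ∈ ball (0 : Z) r, ‖A z'‖ ≤ K * ‖y₁ - y₂‖ := fun z' hz' => by
    simpa [A, dist_eq_norm, Prod.dist_eq] using
      hK.dist_le_mul _ (hmem y₁ hy₁ z' hz') _ (hmem y₂ hy₂ z' hz')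
  have hshell := A.bound_of_shell (C := 2 * K * ‖y₁ - y₂‖ / r) hr (c := (2 : ℝ)) (by norm_num)
    (fun z' hlow hup => ?_) z
  · calc ‖g y₁ z - g y₂ z‖ = ‖A z‖ := rfl
      _ ≤ 2 * K * ‖y₁ - y₂‖ / r * ‖z‖ := hshell
      _ = 2 * K / r * ‖z‖ * ‖y₁ - y₂‖ := by ring
  · rw [Real.norm_two] at hlow
    calc ‖A z'‖ ≤ K * ‖y₁ - y₂‖ := hsmall z' (mem_ball_zero_iff.2 hup)
      _ = 2 * K * ‖y₁ - y₂‖ / r * (r / 2) := by field_simp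
      _ ≤ 2 * K * ‖y₁ - y₂‖ / r * ‖z'‖ := by gcongr

theorem MeasureTheory.IntegrableOn.tendsto_setIntegral_closedBall_inter {G : Type*}
    [NormedAddCommGroup G] [NormedSpace ℝ G] {f : ℝ → G} {S : Set ℝ} (hf : IntegrableOn f S)
    (s : ℝ) : Tendsto (fun δ => ∫ u in closedBall s δ ∩ S, f u) (𝓝 0) (𝓝 0) := by
  have hvol : Tendsto (fun δ => volume (closedBall s δ)) (𝓝 0) (𝓝 0) := by
    simp_rw [Real.volume_closedBall]
    simpa using (ENNReal.continuous_ofReal.comp (continuous_const.mul continuous_id)).tendsto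
      (0 : ℝ) (f := fun δ : ℝ => ENNReal.ofReal (2 * δ))
  have := hf.tendsto_setIntegral_nhds_zero (s := fun δ => closedBall s δ)
    (tendsto_of_tendsto_of_tendsto_of_le_of_le tendsto_const_nhds hvol (fun _ => zero_le)
      fun _ => Measure.restrict_apply_le _ _)
  simpa only [Measure.restrict_restrict measurableSet_closedBall] using this

theorem eqOn_zero_of_eq_intervalIntegral_of_norm_le {E : Type*} [NormedAddCommGroup E]
    [NormedSpace ℝ E] {d F : ℝ → E} {k : ℝ → ℝ} {J : Set ℝ} {s : ℝ} (hJ : IsCompact J)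
    (hJc : J.OrdConnected) (hs : s ∈ J) (hd : ContinuousOn d J) (hk : IntegrableOn k J)
    (hk0 : ∀ u ∈ J, 0 ≤ k u) (hkJ : ∫ u in J, k u < 1) (hF : ∀ u ∈ J, ‖F u‖ ≤ k u * ‖d u‖)
    (hdF : ∀ t ∈ J, d t = ∫ u in s..t, F u) : EqOn d 0 J := by
  obtain ⟨w, hwJ, hmax⟩ := hJ.exists_isMaxOn ⟨s, hs⟩ hd.norm
  have hsub : Ι s w ⊆ J := Ioc_subset_Icc_self.trans (hJc.uIcc_subset hs hwJ)
  have hkM : IntegrableOn (fun u => k u * ‖d w‖) J := hk.mul_const _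
  have hM : ‖d w‖ ≤ ‖d w‖ * ∫ u in J, k u := calc
    ‖d w‖ ≤ ∫ u in Ι s w, ‖F u‖ := by
      rw [hdF w hwJ]; exact intervalIntegral.norm_integral_le_integral_norm_uIoc
    _ ≤ ∫ u in Ι s w, k u * ‖d w‖ :=
      integral_mono_of_nonneg (ae_of_all _ fun _ => norm_nonneg _) (hkM.mono_set hsub)
        ((ae_restrict_iff' measurableSet_uIoc).2 <| ae_of_all _ fun u hu =>
          (hF u (hsub hu)).trans (mul_le_mul_of_nonneg_left (hmax (hsub hu)) (hk0 u (hsub hu))))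
    _ ≤ ∫ u in J, k u * ‖d w‖ :=
      setIntegral_mono_set hkM ((ae_restrict_iff' hJ.measurableSet).2 <| ae_of_all _
        fun u hu => mul_nonneg (hk0 u hu) (norm_nonneg _)) hsub.eventuallyLE
    _ = ‖d w‖ * ∫ u in J, k u := by rw [integral_mul_const, mul_comm]
  have hM0 : ‖d w‖ = 0 := by nlinarith [norm_nonneg (d w)]
  exact fun t ht => norm_le_zero_iff.1 ((hmax ht).trans hM0.le)

namespace IsCaraSol

variable {X Z : Type*} [NormedAddCommGroup X] [NormedSpace ℝ X] {g : X → Z → X} {γ : ℝ → Z}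
  {a b t₀ s t : ℝ} {η η₁ η₂ : ℝ → X}

theorem intervalIntegrable (hη : IsCaraSol g γ a b t₀ η) (hs : s ∈ Icc a b)
    (ht : t ∈ Icc a b) : IntervalIntegrable (fun u => g (η u) (γ u)) volume s t :=
  (hη.2.1.mono_set (uIcc_subset_Icc hs ht)).intervalIntegrable

theorem reanchor (hη : IsCaraSol g γ a b t₀ η) (ht₀ : t₀ ∈ Icc a b) (hs : s ∈ Icc a b) :
    IsCaraSol g γ a b s η := by
  refine ⟨hη.1, hη.2.1, fun t ht => ?_⟩
  rw [hη.2.2 t ht, hη.2.2 s hs, add_assoc, intervalIntegral.integral_add_adjacent_intervals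
    (hη.intervalIntegrable ht₀ hs) (hη.intervalIntegrable hs ht)]

theorem sub_eq_intervalIntegral (hη₁ : IsCaraSol g γ a b s η₁) (hη₂ : IsCaraSol g γ a b s η₂)
    (hs : s ∈ Icc a b) (heq : η₁ s = η₂ s) (ht : t ∈ Icc a b) :
    η₁ t - η₂ t = ∫ u in s..t, (g (η₁ u) (γ u) - g (η₂ u) (γ u)) := by
  rw [intervalIntegral.integral_sub (hη₁.intervalIntegrable hs ht)
    (hη₂.intervalIntegrable hs ht), hη₁.2.2 t ht, hη₂.2.2 t ht, heq]
  abel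

theorem eventuallyEq_of_eq [NormedAddCommGroup Z] [NormedSpace ℝ Z] {V : Set X} (hV : IsOpen V)
    (hg : ContDiffOn ℝ 1 (fun p : X × Z => g p.1 p.2) (V ×ˢ univ))
    (hlin : ∀ x ∈ V, IsLinearMap ℝ (g x)) (hγ : IntegrableOn γ (Icc a b)) (hs : s ∈ Icc a b)
    (hsV : η₁ s ∈ V) (hη₁ : IsCaraSol g γ a b s η₁) (hη₂ : IsCaraSol g γ a b s η₂)
    (heq : η₁ s = η₂ s) : η₁ =ᶠ[𝓝[Icc a b] s] η₂ := by
  obtain ⟨r, hr, L, hL, hlip⟩ :=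
    exists_ball_norm_sub_le_of_contDiffOn_of_isLinearMap hV hg hlin hsV
  have hnear : ∀ᶠ t in 𝓝[Icc a b] s, η₁ t ∈ ball (η₁ s) r ∧ η₂ t ∈ ball (η₁ s) r :=
    ((hη₁.1 s hs).eventually (ball_mem_nhds _ hr)).and
      (heq ▸ (hη₂.1 s hs).eventually (ball_mem_nhds _ hr))
  obtain ⟨ε, hε, hεnear⟩ := Metric.mem_nhdsWithin_iff.1 hnear
  have hk : IntegrableOn (fun u => L * ‖γ u‖) (Icc a b) := hγ.norm.const_mul L
  obtain ⟨δ, ⟨hδ, hδε⟩, hδint⟩ := (Filter.Eventually.and (Ioo_mem_nhdsGT hε)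
    (((hk.tendsto_setIntegral_closedBall_inter s).eventually (gt_mem_nhds one_pos)).filter_mono
      nhdsWithin_le_nhds)).exists
  have hJ : closedBall s δ ∩ Icc a b ⊆ ball s ε ∩ Icc a b :=
    inter_subset_inter_left _ (closedBall_subset_ball hδε)
  have hzero : EqOn (fun t => η₁ t - η₂ t) 0 (closedBall s δ ∩ Icc a b) :=
    eqOn_zero_of_eq_intervalIntegral_of_norm_le
      ((isCompact_closedBall s δ).inter_right isClosed_Icc)
      ((convex_closedBall s δ).ordConnected.inter ordConnected_Icc)
      ⟨mem_closedBall_self hδ.le, hs⟩ ((hη₁.1.sub hη₂.1).mono inter_subset_right)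
      (hk.mono_set inter_subset_right) (fun u _ => by positivity) hδint
      (fun u hu => hlip _ (hεnear (hJ hu)).1 _ (hεnear (hJ hu)).2 (γ u))
      fun t ht => hη₁.sub_eq_intervalIntegral hη₂ hs heq ht.2
  exact mem_nhdsWithin.2 ⟨ball s δ, isOpen_ball, mem_ball_self hδ,
    fun t ht => sub_eq_zero.1 (hzero ⟨ball_subset_closedBall ht.1, ht.2⟩)⟩

end IsCaraSol

theorem global_uniqueness_caratheodory_c1_general
    {E Z : Type*} [NormedAddCommGroup E] [NormedSpace ℝ E]
    [NormedAddCommGroup Z] [NormedSpace ℝ Z]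
    (V : Set E) (hV : IsOpen V) (g : E → Z → E)
    (hg : ContDiffOn ℝ 1 (fun p : E × Z => g p.1 p.2) (V ×ˢ (univ : Set Z)))
    (hlin : ∀ x ∈ V, IsLinearMap ℝ (g x))
    (a b : ℝ) (γ : ℝ → Z) (hγ : IntegrableOn γ (Icc a b))
    (η₁ η₂ : ℝ → E)
    (hη₁V : ∀ t ∈ Icc a b, η₁ t ∈ V)
    (t₀ : ℝ) (ht₀ : t₀ ∈ Icc a b)
    (hη₁ : IsCaraSol g γ a b t₀ η₁) (hη₂ : IsCaraSol g γ a b t₀ η₂)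
    (heq : η₁ t₀ = η₂ t₀) :
    EqOn η₁ η₂ (Icc a b) := by
  refine isPreconnected_Icc.eqOn_of_eventuallyEq_of_eq hη₁.1 hη₂.1 ht₀ heq fun s hs hs_eq => ?_
  exact (hη₁.reanchor ht₀ hs).eventuallyEq_of_eq hV hg hlin hγ hs (hη₁V s hs)
    (hη₂.reanchor ht₀ hs) hs_eq

/-- Global uniqueness of Carathéodory solutions for a right-hand side that is C¹ on an
open set `V` and linear in the second variable: two solutions for the same `γ` which
agree at one point agree on all of `[a,b]`. -/
theorem global_uniqueness_caratheodory_c1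
    {E Z : Type*} [NormedAddCommGroup E] [NormedSpace ℝ E] [CompleteSpace E]
    [NormedAddCommGroup Z] [NormedSpace ℝ Z] [CompleteSpace Z]
    (V : Set E) (hV : IsOpen V) (g : E → Z → E)
    (hg : ContDiffOn ℝ 1 (fun p : E × Z => g p.1 p.2) (V ×ˢ (univ : Set Z)))
    (hlin : ∀ x ∈ V, IsLinearMap ℝ (g x))
    (a b : ℝ) (hab : a < b) (γ : ℝ → Z) (hγ : IntegrableOn γ (Icc a b))
    (η₁ η₂ : ℝ → E)
    (hη₁V : ∀ t ∈ Icc a b, η₁ t ∈ V) (hη₂V : ∀ t ∈ Icc a b, η₂ t ∈ V)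
    (t₀ : ℝ) (ht₀ : t₀ ∈ Icc a b)
    (hη₁ : IsCaraSol g γ a b t₀ η₁) (hη₂ : IsCaraSol g γ a b t₀ η₂)
    (heq : η₁ t₀ = η₂ t₀) :
    EqOn η₁ η₂ (Icc a b) :=
  global_uniqueness_caratheodory_c1_general V hV g hg hlin a b γ hγ η₁ η₂ hη₁V t₀ ht₀ hη₁ hη₂ heq
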